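/- arXiv:1702.08038 — 2 statements merged into one kernel-verified Lean document; each statement's English description precedes it below -/
import Mathlib

section
/- Let q = p^r with p prime and r ≥ 1, and let k, n, j be integers with k > 2, 1 ≤ j < k and n ≥ k. Then for any choice of nonzero elements β_1, …, β_j ∈ F_q^×, S_{F_q}(T_{2,3,…,k}(n) + Σ_{s=1}^{j} β_s ∏_{l=0}^{k−s−1} X_{n−l}) = S_{F_q}(T_{2,3,…,k}(n) + Σ_{s=1}^{j} ∏_{l=0}^{k−s−1} X_{n−l}). -/
open Finset

/-- The exponential sum over `F_q` of a function `G : F_qⁿ → F_q`: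
`S_{F_q}(G) = ∑_{x ∈ F_qⁿ} e^{(2πi/p)·Tr_{F_q/F_p}(G(x))}`. -/
noncomputable def expSumGF (p : ℕ) (F : Type) [Field F] [Fintype F] [Algebra (ZMod p) F]
    (n : ℕ) (G : (Fin n → F) → F) : ℂ :=
  ∑ x : Fin n → F,
    Complex.exp (2 * Real.pi * Complex.I * ((Algebra.trace (ZMod p) F (G x)).val : ℂ) / p)

/-- Extension of a vector `x ∈ F_qⁿ` to a function on `ℕ` (index `i` corresponds
to the variable `X_{i+1}`; out-of-range indices give `0`). -/
def extVar {F : Type} [Zero F] {n : ℕ} (x : Fin n → F) : ℕ → F :=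
  fun i => if h : i < n then x ⟨i, h⟩ else 0

/-- The trapezoid polynomial `T_{2,3,…,k}(n) = ∑_{i=1}^{n−k+1} X_i X_{i+1} ⋯ X_{i+k−1}`. -/
def trapezoid {F : Type} [CommRing F] (k n : ℕ) (x : Fin n → F) : F :=
  ∑ j ∈ Finset.range (n - k + 1), ∏ i ∈ Finset.range k, extVar x (j + i)

private lemma mod_inv_aux (k m i : ℕ) (hk : 0 < k) (hm : k ≤ m + 1) (hi : i < k) :
    (m - (m - i) % k) % k = i := by
  have h1 := Nat.div_add_mod (m - i) k
  have h2 : (m - i) % k < k := Nat.mod_lt _ hk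
  have h3 : m - (m - i) % k = i + k * ((m - i) / k) := by omega
  rw [h3, Nat.add_mul_mod_self_left, Nat.mod_eq_of_lt hi]

/-- Product over a complete residue system read off backwards from `m`. -/
private lemma prod_mod_shift {M : Type} [CommMonoid M] (g : ℕ → M) (k m : ℕ)
    (hk : 0 < k) (hm : k ≤ m + 1) :
    ∏ i ∈ Finset.range k, g ((m - i) % k) = ∏ u ∈ Finset.range k, g u := by
  refine Finset.prod_nbij' (fun i => (m - i) % k) (fun u => (m - u) % k)
    (fun a ha => Finset.mem_range.mpr (Nat.mod_lt _ hk))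
    (fun a ha => Finset.mem_range.mpr (Nat.mod_lt _ hk))
    (fun a ha => mod_inv_aux k m a hk hm (Finset.mem_range.mp ha))
    (fun a ha => mod_inv_aux k m a hk hm (Finset.mem_range.mp ha))
    (fun a ha => rfl)

/-- Let `q = p^r` with `p` prime and `r ≥ 1`, and let `k, n, j` be integers with
`k > 2`, `1 ≤ j < k`, `n ≥ k`.  For any nonzero `β₁, …, β_j ∈ F_q^×`,
`S_{F_q}(T_{2,…,k}(n) + ∑_{s=1}^{j} β_s ∏_{l=0}^{k−s−1} X_{n−l})
  = S_{F_q}(T_{2,…,k}(n) + ∑_{s=1}^{j} ∏_{l=0}^{k−s−1} X_{n−l})`. -/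
theorem trapezoid_perturbation_expSum_eq (p r : ℕ) (hp : p.Prime) (hr : 1 ≤ r)
    {F : Type} [Field F] [Fintype F] [Algebra (ZMod p) F] (hq : Fintype.card F = p ^ r)
    (k n j : ℕ) (hk : 2 < k) (hj1 : 1 ≤ j) (hjk : j < k) (hn : k ≤ n)
    (β : ℕ → F) (hβ : ∀ s ∈ Finset.Icc 1 j, β s ≠ 0) :
    expSumGF p F n (fun x => trapezoid k n x
        + ∑ s ∈ Finset.Icc 1 j, β s * ∏ l ∈ Finset.range (k - s), extVar x (n - 1 - l)) =
    expSumGF p F n (fun x => trapezoid k n x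
        + ∑ s ∈ Finset.Icc 1 j, ∏ l ∈ Finset.range (k - s), extVar x (n - 1 - l)) := by
  classical
  have hk0 : 0 < k := by omega
  -- the telescoping data
  set Qf : ℕ → F := fun m => if k - m ∈ Finset.Icc 1 j then (β (k - m))⁻¹ else 1 with hQf
  have hQfne : ∀ m, Qf m ≠ 0 := by
    intro m
    rw [hQf]
    dsimp only
    split
    · exact inv_ne_zero (hβ _ ‹_›)
    · exact one_ne_zero
  set Q : ℕ → Fˣ := fun m => Units.mk0 (Qf m) (hQfne m) with hQdef
  set e : ℕ → Fˣ := fun u => Q (u + 1) / Q u with hedef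
  have hQ0 : Q 0 = 1 := by
    apply Units.ext
    have h : k - 0 ∉ Finset.Icc 1 j := by
      simp only [Finset.mem_Icc]; omega
    simp only [hQdef, hQf, Units.val_mk0, Units.val_one, if_neg h]
  have hprodE : ∀ m, ∏ u ∈ Finset.range m, e u = Q m := by
    intro m
    rw [hedef]
    rw [Finset.prod_range_div Q m, hQ0, div_one]
  have hQk : Q k = 1 := by
    apply Units.ext
    have h : k - k ∉ Finset.Icc 1 j := by
      simp only [Finset.mem_Icc]; omega
    simp only [hQdef, hQf, Units.val_mk0, Units.val_one, if_neg h]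
  have hQks : ∀ s ∈ Finset.Icc 1 j, (Q (k - s) : F) = (β s)⁻¹ := by
    intro s hs
    have hs' := Finset.mem_Icc.mp hs
    have hks : k - (k - s) = s := by omega
    have hmem : k - (k - s) ∈ Finset.Icc 1 j := by rw [hks]; exact hs
    simp only [hQdef, hQf, Units.val_mk0, hks, if_pos hs]
  -- the change of variables
  set σ : (Fin n → F) ≃ (Fin n → F) :=
    Equiv.piCongrRight (fun i : Fin n =>
      Equiv.mulLeft₀ ((e ((n - 1 - (i : ℕ)) % k) : Fˣ) : F) (Units.ne_zero _)) with hσdef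
  have hσx : ∀ (x : Fin n → F) (t : ℕ) (ht : t < n),
      extVar (σ x) t = ((e ((n - 1 - t) % k) : Fˣ) : F) * extVar x t := by
    intro x t ht
    simp [extVar, hσdef, ht, Equiv.piCongrRight, Equiv.mulLeft₀]
  -- trapezoid is invariant
  have htrap : ∀ x : Fin n → F, trapezoid k n (σ x) = trapezoid k n x := by
    intro x
    unfold trapezoid
    refine Finset.sum_congr rfl fun w hw => ?_
    have hw' : w ≤ n - k := by
      have := Finset.mem_range.mp hw; omega
    have hwin : ∀ i ∈ Finset.range k, extVar (σ x) (w + i)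
        = ((e ((n - 1 - w - i) % k) : Fˣ) : F) * extVar x (w + i) := by
      intro i hi
      have hi' := Finset.mem_range.mp hi
      have hwi : w + i < n := by omega
      have : n - 1 - (w + i) = n - 1 - w - i := by omega
      rw [hσx x (w + i) hwi, this]
    rw [Finset.prod_congr rfl hwin, Finset.prod_mul_distrib]
    have hcoe : ∏ i ∈ Finset.range k, ((e ((n - 1 - w - i) % k) : Fˣ) : F)
        = ((∏ i ∈ Finset.range k, e ((n - 1 - w - i) % k) : Fˣ) : F) :=
      (Units.coe_prod _ _).symm
    rw [hcoe, prod_mod_shift e k (n - 1 - w) hk0 (by omega), hprodE k, hQk]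
    simp
  -- the tail terms absorb the coefficients
  have htail : ∀ (x : Fin n → F), ∀ s ∈ Finset.Icc 1 j,
      β s * ∏ l ∈ Finset.range (k - s), extVar (σ x) (n - 1 - l)
        = ∏ l ∈ Finset.range (k - s), extVar x (n - 1 - l) := by
    intro x s hs
    have hs' := Finset.mem_Icc.mp hs
    have hterm : ∀ l ∈ Finset.range (k - s), extVar (σ x) (n - 1 - l)
        = ((e l : Fˣ) : F) * extVar x (n - 1 - l) := by
      intro l hl
      have hl' := Finset.mem_range.mp hl
      have hln : n - 1 - l < n := by omega
      have h1 : n - 1 - (n - 1 - l) = l := by omega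
      have h2 : l % k = l := Nat.mod_eq_of_lt (by omega)
      rw [hσx x (n - 1 - l) hln, h1, h2]
    rw [Finset.prod_congr rfl hterm, Finset.prod_mul_distrib, ← mul_assoc]
    have hcoe : ∏ l ∈ Finset.range (k - s), ((e l : Fˣ) : F)
        = ((∏ l ∈ Finset.range (k - s), e l : Fˣ) : F) :=
      (Units.coe_prod _ _).symm
    rw [hcoe, hprodE (k - s), hQks s hs, mul_inv_cancel₀ (hβ s hs), one_mul]
  -- conclude
  have key : ∀ x : Fin n → F,
      trapezoid k n (σ x)
        + ∑ s ∈ Finset.Icc 1 j, β s * ∏ l ∈ Finset.range (k - s), extVar (σ x) (n - 1 - l)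
      = trapezoid k n x
        + ∑ s ∈ Finset.Icc 1 j, ∏ l ∈ Finset.range (k - s), extVar x (n - 1 - l) := by
    intro x
    rw [htrap x]
    congr 1
    exact Finset.sum_congr rfl (htail x)
  unfold expSumGF
  rw [← Equiv.sum_comp σ (fun x : Fin n → F =>
    Complex.exp (2 * Real.pi * Complex.I *
      (((Algebra.trace (ZMod p) F (trapezoid k n x
        + ∑ s ∈ Finset.Icc 1 j, β s * ∏ l ∈ Finset.range (k - s),
          extVar x (n - 1 - l))).val : ℂ)) / p))]
  exact Finset.sum_congr rfl fun x _ => by rw [key x]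
end

section
/- Let k ≥ 2 be an integer and q = p^r with p prime, r ≥ 1. The sequence {S_{F_q}(T_{2,3,…,k}(n))}_{n≥k} of exponential sums over F_q of the trapezoid polynomials of degree k satisfies the homogeneous linear recurrence with integer coefficients whose characteristic polynomial is Q_{T,k,F_q}(X) = X^k − q·Σ_{l=0}^{k−2} (q−1)^l X^{k−2−l}; that is, S_{F_q}(T_{2,3,…,k}(n)) = Σ_{l=0}^{k−2} q(q−1)^l · S_{F_q}(T_{2,3,…,k}(n−2−l)) for all n ≥ 2k. -/
open Finset

/-! ### Auxiliary lemmas -/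

noncomputable def psiGF (p : ℕ) (F : Type) [Field F] [Fintype F] [Algebra (ZMod p) F] (y : F) :
    ℂ :=
  Complex.exp (2 * Real.pi * Complex.I * ((Algebra.trace (ZMod p) F y).val : ℂ) / p)

lemma expSumGF_eq_psi (p : ℕ) (F : Type) [Field F] [Fintype F] [Algebra (ZMod p) F]
    (n : ℕ) (G : (Fin n → F) → F) :
    expSumGF p F n G = ∑ x : Fin n → F, psiGF p F (G x) := rfl

lemma zeta_pow (p : ℕ) (m : ℕ) :
    Complex.exp (2 * Real.pi * Complex.I / p) ^ m
      = Complex.exp (2 * Real.pi * Complex.I * m / p) := by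
  rw [← Complex.exp_nat_mul]
  ring_nf

lemma zeta_pow_p (p : ℕ) (hp : 0 < p) :
    Complex.exp (2 * Real.pi * Complex.I / p) ^ p = 1 := by
  rw [zeta_pow p p]
  have hp0 : (p : ℂ) ≠ 0 := Nat.cast_ne_zero.mpr hp.ne'
  rw [mul_div_assoc, div_self hp0, mul_one, Complex.exp_two_pi_mul_I]

lemma zeta_pow_mod (p : ℕ) (hp : 0 < p) (m : ℕ) :
    Complex.exp (2 * Real.pi * Complex.I / p) ^ (m % p)
      = Complex.exp (2 * Real.pi * Complex.I / p) ^ m := by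
  conv_rhs => rw [← Nat.mod_add_div m p]
  rw [pow_add, pow_mul, zeta_pow_p p hp, one_pow, mul_one]

lemma psiGF_eq (p : ℕ) (F : Type) [Field F] [Fintype F] [Algebra (ZMod p) F] (y : F) :
    psiGF p F y
      = Complex.exp (2 * Real.pi * Complex.I / p) ^ (Algebra.trace (ZMod p) F y).val := by
  rw [zeta_pow p, psiGF]

lemma psiGF_add {p : ℕ} (hp : p.Prime) {F : Type} [Field F] [Fintype F] [Algebra (ZMod p) F]
    (a b : F) : psiGF p F (a + b) = psiGF p F a * psiGF p F b := by
  haveI : Fact p.Prime := ⟨hp⟩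
  rw [psiGF_eq p, psiGF_eq p, psiGF_eq p, map_add, ZMod.val_add,
    zeta_pow_mod p hp.pos, pow_add]

lemma psiGF_ne_one {p : ℕ} (hp : p.Prime) {F : Type} [Field F] [Fintype F] [Algebra (ZMod p) F]
    (a : F) (ha : Algebra.trace (ZMod p) F a ≠ 0) : psiGF p F a ≠ 1 := by
  haveI : Fact p.Prime := ⟨hp⟩
  rw [psiGF_eq p]
  set v := (Algebra.trace (ZMod p) F a).val with hv
  have hv0 : 0 < v := Nat.pos_of_ne_zero (fun h => ha ((ZMod.val_eq_zero _).mp h))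
  have hvp : v < p := ZMod.val_lt _
  intro hcon
  rw [zeta_pow p, Complex.exp_eq_one_iff] at hcon
  obtain ⟨m, hm⟩ := hcon
  have hp0 : (p : ℂ) ≠ 0 := Nat.cast_ne_zero.mpr hp.pos.ne'
  have h2 : (2 * (Real.pi : ℂ) * Complex.I) ≠ 0 := by
    simp [Real.pi_ne_zero, Complex.I_ne_zero]
  have h4 : (2 * (Real.pi : ℂ) * Complex.I) * v = (2 * (Real.pi : ℂ) * Complex.I) * (m * p) := by
    have h3 := congrArg (fun z => z * (p : ℂ)) hm
    simp only [div_mul_cancel₀ _ hp0] at h3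
    linear_combination h3
  have h5 : (v : ℂ) = m * p := mul_left_cancel₀ h2 h4
  have hZ : (v : ℤ) = m * p := by exact_mod_cast h5
  have hdvd : (p : ℤ) ∣ (v : ℤ) := ⟨m, by linarith⟩
  have : p ∣ v := Int.ofNat_dvd.mp (by exact_mod_cast hdvd)
  exact absurd (Nat.le_of_dvd hv0 this) (by omega)

lemma psiGF_sum_mul {p : ℕ} (hp : p.Prime) {F : Type} [Field F] [Fintype F]
    [Algebra (ZMod p) F] (c : F) (hc : c ≠ 0) : ∑ t : F, psiGF p F (c * t) = 0 := by
  haveI : Fact p.Prime := ⟨hp⟩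
  obtain ⟨a, ha⟩ := Algebra.trace_surjective (ZMod p) F 1
  set b := c⁻¹ * a with hb
  have hcb : c * b = a := by rw [hb, mul_inv_cancel_left₀ hc]
  have htr : Algebra.trace (ZMod p) F (c * b) ≠ 0 := by rw [hcb, ha]; exact one_ne_zero
  have hne := psiGF_ne_one hp (c * b) htr
  have key : ∑ t : F, psiGF p F (c * t) = (∑ t : F, psiGF p F (c * t)) * psiGF p F (c * b) := by
    have h1 : ∑ t : F, psiGF p F (c * (t + b)) = ∑ t : F, psiGF p F (c * t) :=
      Fintype.sum_equiv (Equiv.addRight b) _ _ (fun t => by simp [Equiv.coe_addRight])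
    conv_lhs => rw [← h1]
    rw [Finset.sum_mul]
    apply Finset.sum_congr rfl
    intro t _
    rw [mul_add, psiGF_add hp]
  have hz : (∑ t : F, psiGF p F (c * t)) * (1 - psiGF p F (c * b)) = 0 := by
    rw [mul_sub, mul_one, ← key, sub_self]
  rcases mul_eq_zero.mp hz with h | h
  · exact h
  · exact absurd (by linear_combination -h : psiGF p F (c * b) = 1) hne

/-! ### Splicing vectors -/

def splice {F : Type} [Zero F] {n : ℕ} (a : ℕ) {b : ℕ} (y : Fin a → F) (u : Fin b → F) :
    Fin n → F :=
  fun i => if h : (i : ℕ) < a then y ⟨i, h⟩ else extVar u ((i : ℕ) - a)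

lemma extVar_lt {F : Type} [Zero F] {n : ℕ} (x : Fin n → F) (i : ℕ) (h : i < n) :
    extVar x i = x ⟨i, h⟩ := dif_pos h

lemma extVar_splice {F : Type} [Zero F] {n a b : ℕ} (h : n = a + b)
    (y : Fin a → F) (u : Fin b → F) (i : ℕ) :
    extVar (splice a y u (n := n)) i = if i < a then extVar y i else extVar u (i - a) := by
  by_cases h1 : i < n
  · by_cases h2 : i < a
    · simp [extVar, splice, h1, h2]
    · simp [extVar, splice, h1, h2]
  · have h2 : ¬ i < a := by omega
    have h3 : ¬ i - a < b := by omega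
    simp [extVar, splice, h1, h2, h3]

def spliceEquiv (F : Type) [Zero F] (a b : ℕ) :
    ((Fin a → F) × (Fin b → F)) ≃ (Fin (a + b) → F) where
  toFun yz := splice a yz.1 yz.2
  invFun x := (fun i => x ⟨i, by omega⟩, fun j => x ⟨a + j, by omega⟩)
  left_inv yz := by
    obtain ⟨y, u⟩ := yz
    simp only [Prod.mk.injEq]
    refine ⟨by funext i; simp [splice], ?_⟩
    funext i
    · simp only [splice]
      have h : ¬ ((a : ℕ) + (i : ℕ) < a) := by omega
      rw [dif_neg h]
      unfold extVar
      have h2 : a + (i : ℕ) - a = (i : ℕ) := by omega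
      rw [h2]
      simp
  right_inv x := by
    funext i
    simp only [splice]
    by_cases h : (i : ℕ) < a
    · rw [dif_pos h]
    · rw [dif_neg h]
      unfold extVar
      have hb : (i : ℕ) - a < b := by omega
      rw [dif_pos hb]
      apply congrArg
      apply Fin.ext
      simp
      omega

lemma sum_splice {F : Type} [Zero F] [Fintype F] {n : ℕ} (a b : ℕ)
    (h : n = a + b) (f : (Fin n → F) → ℂ) :
    ∑ x : Fin n → F, f x
      = ∑ y : Fin a → F, ∑ u : Fin b → F, f (splice a y u) := by
  subst h
  rw [← Equiv.sum_comp (spliceEquiv F a b) f, Fintype.sum_prod_type]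
  rfl

/-! ### Trapezoid under splicing -/

lemma trapezoid_splice_zero {F : Type} [CommRing F] {k a l n : ℕ} (hak : k ≤ a)
    (hl : l + 2 ≤ k) (hn : n = a + (l + 2)) (y : Fin a → F) (u : Fin (l + 2) → F)
    (hu : extVar u 0 = 0) :
    trapezoid k n (splice a y u) = trapezoid k a y := by
  unfold trapezoid
  have h1 : n - k + 1 = (a - k + 1) + (l + 2) := by omega
  rw [h1, Finset.sum_range_add]
  have h2 : ∑ x ∈ Finset.range (l + 2),
      ∏ i ∈ Finset.range k, extVar (splice a y u (n := n)) ((a - k + 1 + x) + i) = 0 := by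
    apply Finset.sum_eq_zero
    intro x hx
    rw [Finset.mem_range] at hx
    set j := a - k + 1 + x with hj
    have hja : j ≤ a := by omega
    apply Finset.prod_eq_zero (i := a - j) (Finset.mem_range.mpr (by omega))
    rw [show j + (a - j) = a by omega, extVar_splice hn, if_neg (lt_irrefl a),
      Nat.sub_self]
    exact hu
  rw [h2, add_zero]
  apply Finset.sum_congr rfl
  intro j hj
  rw [Finset.mem_range] at hj
  apply Finset.prod_congr rfl
  intro i hi
  rw [Finset.mem_range] at hi
  rw [extVar_splice hn, if_pos (by omega)]

lemma trapezoid_splice_last {F : Type} [CommRing F] {k a n : ℕ} (hk : 2 ≤ k) (hak : k ≤ a)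
    (hn : n = a + 1) (y : Fin a → F) (u : Fin 1 → F) :
    trapezoid k n (splice a y u)
      = trapezoid k a y
        + (∏ i ∈ Finset.range (k - 1), extVar y (a + 1 - k + i)) * extVar u 0 := by
  unfold trapezoid
  have h1 : n - k + 1 = (a - k + 1) + 1 := by omega
  rw [h1, Finset.sum_range_succ]
  congr 1
  · apply Finset.sum_congr rfl
    intro j hj
    rw [Finset.mem_range] at hj
    apply Finset.prod_congr rfl
    intro i hi
    rw [Finset.mem_range] at hi
    rw [extVar_splice hn, if_pos (by omega)]
  · obtain ⟨m, rfl⟩ : ∃ m, k = m + 1 := ⟨k - 1, by omega⟩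
    rw [Finset.prod_range_succ]
    have hlast : a - (m + 1) + 1 + m = a := by omega
    rw [hlast, extVar_splice hn, if_neg (lt_irrefl a), Nat.sub_self]
    congr 1
    · apply Finset.prod_congr (by congr 1 <;> omega) ?_
      intro i hi
      rw [Finset.mem_range] at hi
      rw [extVar_splice hn, if_pos (by omega)]
      congr 1
      omega

/-! ### Counting -/

lemma nat_card_ne_zero {F : Type} [Field F] [Fintype F] :
    Nat.card {x : F // x ≠ 0} = Fintype.card F - 1 := by
  classical
  rw [Nat.card_eq_fintype_card]
  have := Fintype.card_subtype_compl (fun x : F => x = 0)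
  simp only [Fintype.card_subtype_eq] at this
  convert this using 2

lemma count_cond {F : Type} [Field F] [Fintype F] (l : ℕ) :
    Nat.card {u : Fin (l + 2) → F //
        u ⟨0, by omega⟩ = 0 ∧ ∀ i : Fin (l + 2), 1 ≤ (i : ℕ) → (i : ℕ) ≤ l → u i ≠ 0}
      = Fintype.card F * (Fintype.card F - 1) ^ l := by
  classical
  have e1 : {u : Fin (l + 2) → F //
        u ⟨0, by omega⟩ = 0 ∧ ∀ i : Fin (l + 2), 1 ≤ (i : ℕ) → (i : ℕ) ≤ l → u i ≠ 0}
      ≃ ∀ i : Fin (l + 2),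
          {x : F // ((i : ℕ) = 0 → x = 0) ∧ (1 ≤ (i : ℕ) → (i : ℕ) ≤ l → x ≠ 0)} := by
    refine (Equiv.subtypeEquivRight ?_).trans
      (Equiv.subtypePiEquivPi
        (p := fun (i : Fin (l + 2)) (x : F) =>
          ((i : ℕ) = 0 → x = 0) ∧ (1 ≤ (i : ℕ) → (i : ℕ) ≤ l → x ≠ 0)))
    intro u
    constructor
    · rintro ⟨h0, h1⟩ i
      refine ⟨fun hi => ?_, h1 i⟩
      have : i = ⟨0, by omega⟩ := Fin.ext hi
      rw [this]; exact h0
    · intro h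
      exact ⟨(h ⟨0, by omega⟩).1 rfl, fun i => (h i).2⟩
  rw [Nat.card_congr e1, Nat.card_pi]
  have hfac : ∀ i : Fin (l + 2),
      Nat.card {x : F // ((i : ℕ) = 0 → x = 0) ∧ (1 ≤ (i : ℕ) → (i : ℕ) ≤ l → x ≠ 0)}
        = (fun j : ℕ => if j = 0 then 1 else if j ≤ l then Fintype.card F - 1
            else Fintype.card F) (i : ℕ) := by
    intro i
    by_cases h0 : (i : ℕ) = 0
    · have e2 : {x : F // ((i : ℕ) = 0 → x = 0) ∧ (1 ≤ (i : ℕ) → (i : ℕ) ≤ l → x ≠ 0)}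
          ≃ {x : F // x = 0} := by
        apply Equiv.subtypeEquivRight
        intro x
        constructor
        · rintro ⟨hx, -⟩; exact hx h0
        · intro hx; exact ⟨fun _ => hx, fun h1 => absurd h0 (by omega)⟩
      haveI : Unique {x : F // x = 0} :=
        ⟨⟨⟨0, rfl⟩⟩, by rintro ⟨a, rfl⟩; rfl⟩
      rw [Nat.card_congr e2, Nat.card_unique]
      simp [h0]
    · by_cases hl : (i : ℕ) ≤ l
      · have e2 : {x : F // ((i : ℕ) = 0 → x = 0) ∧ (1 ≤ (i : ℕ) → (i : ℕ) ≤ l → x ≠ 0)}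
            ≃ {x : F // x ≠ 0} := by
          apply Equiv.subtypeEquivRight
          intro x
          constructor
          · rintro ⟨-, hx⟩; exact hx (by omega) hl
          · intro hx; exact ⟨fun h => absurd h h0, fun _ _ => hx⟩
        rw [Nat.card_congr e2, nat_card_ne_zero]
        simp [h0, hl]
      · have e2 : {x : F // ((i : ℕ) = 0 → x = 0) ∧ (1 ≤ (i : ℕ) → (i : ℕ) ≤ l → x ≠ 0)}
            ≃ F := by
          apply Equiv.subtypeUnivEquiv
          intro x
          exact ⟨fun h => absurd h h0, fun _ h => absurd h hl⟩
        rw [Nat.card_congr e2, Nat.card_eq_fintype_card]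
        simp [h0, hl]
  rw [Finset.prod_congr rfl (fun i _ => hfac i), ← Finset.prod_range
    (fun j => if j = 0 then 1 else if j ≤ l then Fintype.card F - 1 else Fintype.card F)]
  rw [Finset.prod_range_succ, Finset.prod_range_succ']
  have h1 : ∀ j < l, (if j + 1 = 0 then 1 else if j + 1 ≤ l then Fintype.card F - 1
      else Fintype.card F) = Fintype.card F - 1 := by
    intro j hj
    rw [if_neg (by omega), if_pos (by omega)]
  rw [Finset.prod_congr rfl (fun j hj => h1 j (Finset.mem_range.mp hj)), Finset.prod_const,
    if_pos rfl, if_neg (by omega : ¬ (l + 1 = 0)), if_neg (by omega : ¬ (l + 1 ≤ l)),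
    Finset.card_range]
  ring

/-! ### The trailing-nonzero count -/

def tnz (F : Type) [Zero F] [DecidableEq F] (s n : ℕ) (x : Fin n → F) : ℕ :=
  if h : ∃ j, j < s ∧ extVar x (n - 2 - j) = 0 then Nat.find h else s

lemma tnz_le {F : Type} [Zero F] [DecidableEq F] (s n : ℕ) (x : Fin n → F) :
    tnz F s n x ≤ s := by
  unfold tnz
  split_ifs with h
  · exact le_of_lt (Nat.find_spec h).1
  · exact le_rfl

lemma tnz_eq_iff {F : Type} [Zero F] [DecidableEq F] {s n l : ℕ} (hl : l < s) (x : Fin n → F) :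
    tnz F s n x = l
      ↔ (extVar x (n - 2 - l) = 0 ∧ ∀ j < l, extVar x (n - 2 - j) ≠ 0) := by
  unfold tnz
  split_ifs with h
  · rw [Nat.find_eq_iff]
    constructor
    · rintro ⟨⟨-, h0⟩, hmin⟩
      exact ⟨h0, fun j hj hz => hmin j hj ⟨by omega, hz⟩⟩
    · rintro ⟨h0, hmin⟩
      exact ⟨⟨hl, h0⟩, fun j hj hpj => hmin j hj hpj.2⟩
  · push_neg at h
    constructor
    · intro he; omega
    · rintro ⟨h0, -⟩; exact absurd h0 (h l hl)

lemma tnz_eq_self {F : Type} [Zero F] [DecidableEq F] {s n : ℕ} (x : Fin n → F) :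
    tnz F s n x = s ↔ ∀ j < s, extVar x (n - 2 - j) ≠ 0 := by
  unfold tnz
  split_ifs with h
  · constructor
    · intro he
      have hsp := Nat.find_spec h
      rw [he] at hsp
      exact absurd hsp.1 (lt_irrefl s)
    · intro hall
      exfalso
      have hsp := Nat.find_spec h
      exact hall _ hsp.1 hsp.2
  · push_neg at h
    exact ⟨fun _ => h, fun _ => rfl⟩

/-! ### Main theorem -/

/-- Let `k ≥ 2` and `q = p^r` with `p` prime, `r ≥ 1`.  The sequence
`{S_{F_q}(T_{2,3,…,k}(n))}` satisfies the homogeneous linear recurrence with integer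
coefficients whose characteristic polynomial is
`Q_{T,k,F_q}(X) = X^k − q ∑_{l=0}^{k−2} (q−1)^l X^{k−2−l}`, i.e.
`S_{F_q}(T_{2,…,k}(n)) = ∑_{l=0}^{k−2} q(q−1)^l · S_{F_q}(T_{2,…,k}(n−2−l))` for `n ≥ 2k`. -/
theorem trapezoid_expSum_linear_recurrence_GF (p r : ℕ) (hp : p.Prime) (hr : 1 ≤ r)
    {F : Type} [Field F] [Fintype F] [Algebra (ZMod p) F] (hq : Fintype.card F = p ^ r)
    (k : ℕ) (hk : 2 ≤ k) (n : ℕ) (hn : 2 * k ≤ n) :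
    expSumGF p F n (trapezoid k n) =
      ∑ l ∈ Finset.range (k - 1),
        ((p ^ r * (p ^ r - 1) ^ l : ℕ) : ℂ) *
          expSumGF p F (n - 2 - l) (trapezoid k (n - 2 - l)) := by
  classical
  haveI : Fact p.Prime := ⟨hp⟩
  rw [expSumGF_eq_psi]
  have key := Finset.sum_fiberwise_of_maps_to (s := (univ : Finset (Fin n → F)))
    (t := range ((k - 1) + 1)) (g := fun x => tnz F (k - 1) n x)
    (fun x _ => mem_range.mpr (Nat.lt_succ_of_le (tnz_le (k - 1) n x)))
    (fun x => psiGF p F (trapezoid k n x))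
  rw [← key, Finset.sum_range_succ]
  -- the last fiber vanishes
  have hlast : ∑ x ∈ univ.filter (fun x => tnz F (k - 1) n x = k - 1),
      psiGF p F (trapezoid k n x) = 0 := by
    rw [Finset.sum_filter, sum_splice (n - 1) 1 (by omega)]
    apply Finset.sum_eq_zero
    intro y _
    have htrans : ∀ t : Fin 1 → F,
        (tnz F (k - 1) n (splice (n - 1) y t) = k - 1)
          ↔ (∀ j < k - 1, extVar y (n - 2 - j) ≠ 0) := by
      intro t
      rw [tnz_eq_self]
      constructor
      · intro h j hj
        have := h j hj
        rwa [extVar_splice (by omega : n = (n - 1) + 1), if_pos (by omega)] at this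
      · intro h j hj
        rw [extVar_splice (by omega : n = (n - 1) + 1), if_pos (by omega)]
        exact h j hj
    by_cases hc : ∀ j < k - 1, extVar y (n - 2 - j) ≠ 0
    · have hc0 : (∏ i ∈ Finset.range (k - 1), extVar y ((n - 1) + 1 - k + i)) ≠ 0 := by
        rw [Finset.prod_ne_zero_iff]
        intro i hi
        rw [Finset.mem_range] at hi
        have heq : (n - 1) + 1 - k + i = n - 2 - (k - 2 - i) := by omega
        rw [heq]
        exact hc (k - 2 - i) (by omega)
      have step1 : ∀ t : Fin 1 → F,
          (if tnz F (k - 1) n (splice (n - 1) y t) = k - 1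
            then psiGF p F (trapezoid k n (splice (n - 1) y t)) else 0)
          = psiGF p F (trapezoid k (n - 1) y) *
              psiGF p F ((∏ i ∈ Finset.range (k - 1), extVar y ((n - 1) + 1 - k + i))
                * extVar t 0) := by
        intro t
        rw [if_pos ((htrans t).mpr hc),
          trapezoid_splice_last hk (by omega : k ≤ n - 1) (by omega : n = (n - 1) + 1),
          psiGF_add hp]
      rw [Finset.sum_congr rfl (fun t _ => step1 t), ← Finset.mul_sum]
      have hsum : ∑ t : Fin 1 → F,
          psiGF p F ((∏ i ∈ Finset.range (k - 1), extVar y ((n - 1) + 1 - k + i))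
            * extVar t 0)
          = ∑ x : F,
              psiGF p F ((∏ i ∈ Finset.range (k - 1), extVar y ((n - 1) + 1 - k + i)) * x) := by
        apply Fintype.sum_equiv (Equiv.funUnique (Fin 1) F)
        intro t
        have : extVar t 0 = t 0 := extVar_lt t 0 (by omega)
        rw [this]
        rfl
      rw [hsum, psiGF_sum_mul hp _ hc0, mul_zero]
    · apply Finset.sum_eq_zero
      intro t _
      rw [if_neg (fun h => hc ((htrans t).mp h))]
  rw [hlast, add_zero]
  -- the main fibers
  apply Finset.sum_congr rfl
  intro l hl
  have hl' : l < k - 1 := Finset.mem_range.mp hl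
  set a := n - 2 - l with haa
  have hn2 : n = a + (l + 2) := by omega
  have hcond : ∀ (y : Fin a → F) (u : Fin (l + 2) → F),
      tnz F (k - 1) n (splice a y u) = l
        ↔ (u ⟨0, by omega⟩ = 0 ∧ ∀ i : Fin (l + 2), 1 ≤ (i : ℕ) → (i : ℕ) ≤ l → u i ≠ 0) := by
    intro y u
    rw [tnz_eq_iff hl']
    have hpos : ∀ j, j ≤ l →
        extVar (splice a y u (n := n)) (n - 2 - j) = extVar u (l - j) := by
      intro j hj
      rw [extVar_splice hn2, if_neg (by omega)]
      congr 1
      omega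
    constructor
    · rintro ⟨h0, hmin⟩
      constructor
      · rw [hpos l le_rfl, Nat.sub_self, extVar_lt u 0 (by omega)] at h0
        exact h0
      · intro i h1 h2
        have := hmin (l - (i : ℕ)) (by omega)
        rw [hpos _ (by omega), show l - (l - (i : ℕ)) = (i : ℕ) by omega,
          extVar_lt u (i : ℕ) (by omega)] at this
        rwa [show (⟨(i : ℕ), by omega⟩ : Fin (l + 2)) = i from Fin.ext rfl] at this
    · rintro ⟨h0, hall⟩
      constructor
      · rw [hpos l le_rfl, Nat.sub_self, extVar_lt u 0 (by omega)]
        exact h0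
      · intro j hj
        rw [hpos j (by omega), extVar_lt u (l - j) (by omega)]
        exact hall ⟨l - j, by omega⟩ (by show 1 ≤ l - j; omega) (by show l - j ≤ l; omega)
  have hval : ∀ (y : Fin a → F) (u : Fin (l + 2) → F), u ⟨0, by omega⟩ = 0 →
      trapezoid k n (splice a y u) = trapezoid k a y := by
    intro y u h0
    apply trapezoid_splice_zero (by omega : k ≤ a) (by omega : l + 2 ≤ k) hn2
    rw [extVar_lt u 0 (by omega)]
    exact h0
  have hcnt : ∑ u : Fin (l + 2) → F,
      (if (u ⟨0, by omega⟩ = 0 ∧ ∀ i : Fin (l + 2), 1 ≤ (i : ℕ) → (i : ℕ) ≤ l → u i ≠ 0)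
        then (1 : ℂ) else 0)
      = ((p ^ r * (p ^ r - 1) ^ l : ℕ) : ℂ) := by
    rw [Finset.sum_boole]
    congr 1
    rw [← Fintype.card_subtype, ← Nat.card_eq_fintype_card, ← hq]
    exact count_cond l
  calc ∑ x ∈ univ.filter (fun x => tnz F (k - 1) n x = l), psiGF p F (trapezoid k n x)
      = ∑ x : Fin n → F,
          (if tnz F (k - 1) n x = l then psiGF p F (trapezoid k n x) else 0) := by
        rw [Finset.sum_filter]
    _ = ∑ y : Fin a → F, ∑ u : Fin (l + 2) → F,
          (if tnz F (k - 1) n (splice a y u) = l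
            then psiGF p F (trapezoid k n (splice a y u)) else 0) :=
        sum_splice a (l + 2) hn2 _
    _ = ∑ y : Fin a → F, ∑ u : Fin (l + 2) → F,
          (if (u ⟨0, by omega⟩ = 0 ∧ ∀ i : Fin (l + 2), 1 ≤ (i : ℕ) → (i : ℕ) ≤ l → u i ≠ 0)
            then psiGF p F (trapezoid k a y) else 0) := by
        apply Finset.sum_congr rfl
        intro y _
        apply Finset.sum_congr rfl
        intro u _
        by_cases hcnd : tnz F (k - 1) n (splice a y u) = l
        · rw [if_pos hcnd, if_pos ((hcond y u).mp hcnd),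
            hval y u ((hcond y u).mp hcnd).1]
        · rw [if_neg hcnd, if_neg (fun hh => hcnd ((hcond y u).mpr hh))]
    _ = ∑ y : Fin a → F, psiGF p F (trapezoid k a y) *
          ∑ u : Fin (l + 2) → F,
            (if (u ⟨0, by omega⟩ = 0 ∧ ∀ i : Fin (l + 2), 1 ≤ (i : ℕ) → (i : ℕ) ≤ l → u i ≠ 0)
              then (1 : ℂ) else 0) := by
        apply Finset.sum_congr rfl
        intro y _
        rw [Finset.mul_sum]
        apply Finset.sum_congr rfl
        intro u _
        rw [mul_ite, mul_one, mul_zero]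
    _ = ((p ^ r * (p ^ r - 1) ^ l : ℕ) : ℂ) * expSumGF p F a (trapezoid k a) := by
        rw [Finset.sum_congr rfl (fun y _ => by rw [hcnt]), ← Finset.sum_mul,
          expSumGF_eq_psi, mul_comm]
end
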